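/- arXiv:2306.05852 — 2 statements merged into one kernel-verified Lean document; each statement's English description precedes it below -/
import Mathlib

section
/- Let p ≥ 3 be prime and G a p-group. Suppose χ is a nonlinear irreducible character of G, and for i = 1,2 there are subgroups H_i ≤ G and linear characters λ_i of H_i with χ = Ind_{H_i}^G(λ_i) and ℚ(χ) = ℚ(λ_i). Then ker(λ_1) is normal in G if and only if ker(λ_2) is normal in G. -/
open scoped Classical
noncomputable section

/-- The kernel of a character, as a set. -/
def charKer {G : Type*} [Group G] (χ : G → ℂ) : Set G := {g | χ g = χ 1}

/-- The center `Z(χ)` of a character, as a set. -/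
def charZ {G : Type*} [Group G] (χ : G → ℂ) : Set G :=
  {g | ‖χ g‖ = ‖χ 1‖}

/-- `χ` is the character of an irreducible complex representation of `G`. -/
def IsIrrChar (G : Type) [Group G] (χ : G → ℂ) : Prop :=
  ∃ V : FDRep ℂ G, CategoryTheory.Simple V ∧ χ = V.character

/-- The field `ℚ(χ)` generated over `ℚ` by the values of `χ`. -/
def QChar {G : Type*} (χ : G → ℂ) : IntermediateField ℚ ℂ :=
  IntermediateField.adjoin ℚ (Set.range χ)

/-- The order of the Galois group `Γ(χ)` of `ℚ(χ)/ℚ`. -/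
def galCard {G : Type*} (χ : G → ℂ) : ℕ :=
  Nat.card (QChar χ ≃ₐ[ℚ] QChar χ)

/-- The codegree `cod(χ) = |G/ker χ| / χ(1)`, as a rational number,
where `d = χ(1)` is the degree of `χ`. -/
def codeg {G : Type*} [Group G] [Fintype G] (χ : G → ℂ) (d : ℕ) : ℚ :=
  (Fintype.card G : ℚ) / ((Nat.card (charKer χ)) * d)

/-- The character of `G` induced from the linear character `lam` of `H`. -/
def indChar {G : Type*} [Group G] [Fintype G] (H : Subgroup G) (lam : H →* ℂˣ) : G → ℂ :=
  fun g => (Nat.card H : ℂ)⁻¹ *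
    ∑ x : G, if h : x * g * x⁻¹ ∈ H then ((lam ⟨x * g * x⁻¹, h⟩ : ℂˣ) : ℂ) else 0

/-- The values field `ℚ(λ)` of a linear character. -/
def QLin {H : Type*} [Group H] (lam : H →* ℂˣ) : IntermediateField ℚ ℂ :=
  IntermediateField.adjoin ℚ (Set.range fun h => ((lam h : ℂˣ) : ℂ))

/-!
Since `ker (Ind λ) = Core_G (ker λ)`, a normal `ker λ₁` equals `ker χ = Core_G (ker λ₂) ≤ ker λ₂`.
It remains to see that the two kernels have the same order
`|Hᵢ| / |λᵢ(Hᵢ)|`. Both `Hᵢ` have index `χ(1)`, and `λᵢ(Hᵢ)` is the cyclic group of `nᵢ`-th roots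
of unity, so `[ℚ(χ) : ℚ] = φ(nᵢ)`. The `nᵢ` are powers of `p`, and `φ` is injective on powers of
an odd prime, so `n₁ = n₂`.
-/

namespace Complex

open scoped ComplexOrder

theorem sum_eq_card_iff_forall_eq_one {ι : Type*} [Fintype ι] {f : ι → ℂ}
    (hf : ∀ i, ‖f i‖ ≤ 1) : ∑ i, f i = Fintype.card ι ↔ ∀ i, f i = 1 := by
  refine ⟨fun hsum i => ?_, fun h => by simp [h]⟩
  have hre_le : ∀ i ∈ Finset.univ, (f i).re ≤ 1 := fun i _ => (re_le_norm _).trans (hf i)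
  have hre : ∀ i, (f i).re = 1 := by
    have h : ∑ i, (f i).re = ∑ _i : ι, (1 : ℝ) := by simpa using congrArg re hsum
    exact fun i => (Finset.sum_eq_sum_iff_of_le hre_le).1 h i (Finset.mem_univ i)
  -- `re ≤ ‖·‖ ≤ 1 = re` forces `f i` onto the nonnegative real axis
  have hnonneg : 0 ≤ f i :=
    re_eq_norm.1 (le_antisymm (re_le_norm _) ((hf i).trans (hre i).ge))
  rw [eq_coe_norm_of_nonneg hnonneg, ← re_eq_norm.2 hnonneg, hre i, ofReal_one]

end Complex

theorem norm_val_units_monoidHom {H : Type*} [Group H] [Finite H] (lam : H →* ℂˣ) (h : H) :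
    ‖((lam h : ℂˣ) : ℂ)‖ = 1 := by
  refine Complex.norm_eq_one_of_pow_eq_one (n := Nat.card H) ?_ Nat.card_pos.ne'
  rw [← Units.val_pow_eq_pow_val, ← map_pow, pow_card_eq_one', map_one, Units.val_one]

section Induced

variable {G : Type*} [Group G] (H : Subgroup G) (lam : H →* ℂˣ)

theorem mem_map_subtype_ker_iff (y : G) :
    y ∈ lam.ker.map H.subtype ↔ ∃ h : y ∈ H, lam ⟨y, h⟩ = 1 := by
  constructor
  · rintro ⟨k, hk, rfl⟩
    exact ⟨k.2, hk⟩
  · rintro ⟨h, h1⟩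
    exact ⟨⟨y, h⟩, h1, rfl⟩

theorem card_map_subtype_ker_mul_card_range :
    Nat.card (lam.ker.map H.subtype) * Nat.card lam.range = Nat.card H := by
  rw [Subgroup.card_map_of_injective H.subtype_injective, ← Subgroup.index_ker lam,
    Subgroup.card_mul_index]

variable [Fintype G]

theorem indChar_one : indChar H lam 1 = Fintype.card G / Nat.card H := by
  have hone : ∀ h : (1 : G) ∈ H, (⟨1, h⟩ : H) = 1 := fun _ => rfl
  simp [indChar, hone, div_eq_inv_mul]

theorem charKer_indChar :
    charKer (indChar H lam) = ((lam.ker.map H.subtype).normalCore : Set G) := by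
  ext g
  set f : G → ℂ := fun x =>
    if h : x * g * x⁻¹ ∈ H then ((lam ⟨x * g * x⁻¹, h⟩ : ℂˣ) : ℂ) else 0
  have hf_le : ∀ x, ‖f x‖ ≤ 1 := by
    intro x
    by_cases hx : x * g * x⁻¹ ∈ H
    · simp only [f, dif_pos hx, norm_val_units_monoidHom, le_refl]
    · simp only [f, dif_neg hx, norm_zero, zero_le_one]
  have hf_eq_one : ∀ x, f x = 1 ↔ x * g * x⁻¹ ∈ lam.ker.map H.subtype := by
    intro x
    rw [mem_map_subtype_ker_iff]
    by_cases hx : x * g * x⁻¹ ∈ H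
    · simp only [f, dif_pos hx, Units.val_eq_one, exists_prop_of_true hx]
    · simp only [f, dif_neg hx, zero_ne_one, exists_prop_of_false hx]
  have hH : (Nat.card H : ℂ)⁻¹ ≠ 0 := inv_ne_zero (Nat.cast_ne_zero.2 Nat.card_pos.ne')
  change (Nat.card H : ℂ)⁻¹ * ∑ x, f x = indChar H lam 1 ↔ _
  rw [indChar_one, div_eq_inv_mul, mul_right_inj' hH,
    Complex.sum_eq_card_iff_forall_eq_one hf_le]
  exact forall_congr' hf_eq_one

end Induced

open IntermediateField in
theorem finrank_QLin {H : Type*} [Group H] [Finite H] (lam : H →* ℂˣ) :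
    Module.finrank ℚ (QLin lam) = (Nat.card lam.range).totient := by
  have : Finite lam.range := Finite.of_surjective _ lam.rangeRestrict_surjective
  obtain ⟨g, hg⟩ := IsCyclic.exists_generator (α := lam.range)
  set ζ : ℂ := ((g : ℂˣ) : ℂ)
  have hζ : IsPrimitiveRoot ζ (Nat.card lam.range) := by
    rw [← orderOf_eq_card_of_forall_mem_zpowers hg, ← Subgroup.orderOf_coe, ← orderOf_units]
    exact IsPrimitiveRoot.orderOf ζ
  have hQ : QLin lam = ℚ⟮ζ⟯ := by
    apply le_antisymm
    · rw [QLin, IntermediateField.adjoin_le_iff]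
      rintro _ ⟨h, rfl⟩
      obtain ⟨k, hk⟩ := hg ⟨lam h, h, rfl⟩
      have hval : ((lam h : ℂˣ) : ℂ) = ζ ^ k := by
        simpa [ζ] using (congrArg (fun u : lam.range => ((u : ℂˣ) : ℂ)) hk).symm
      change ((lam h : ℂˣ) : ℂ) ∈ ℚ⟮ζ⟯
      rw [hval]
      exact zpow_mem (IntermediateField.mem_adjoin_simple_self ℚ ζ) k
    · obtain ⟨h, hh⟩ := g.2
      rw [IntermediateField.adjoin_simple_le_iff]
      exact IntermediateField.subset_adjoin ℚ _ ⟨h, congrArg Units.val hh⟩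
  rw [hQ, IntermediateField.adjoin.finrank (hζ.isIntegral Nat.card_pos).tower_top,
    ← Polynomial.cyclotomic_eq_minpoly_rat hζ Nat.card_pos, Polynomial.natDegree_cyclotomic]

theorem Nat.totient_prime_pow_strictMono {p : ℕ} (hp : p.Prime) (h3 : 3 ≤ p) :
    StrictMono fun k => (p ^ k).totient := by
  refine strictMono_nat_of_lt_succ fun k => ?_
  calc (p ^ k).totient ≤ p ^ k := Nat.totient_le _
    _ < p ^ k * (p - 1) := lt_mul_right (pow_pos hp.pos k) (by omega)
    _ = (p ^ (k + 1)).totient := (Nat.totient_prime_pow_succ hp k).symm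

theorem IsPGroup.exists_card_range_eq {p : ℕ} [Fact p.Prime] {H K : Type*} [Group H] [Group K]
    [Finite H] (hH : IsPGroup p H) (f : H →* K) : ∃ k, Nat.card f.range = p ^ k := by
  obtain ⟨n, hn⟩ := hH.exists_card_eq
  obtain ⟨k, -, hk⟩ := (Nat.dvd_prime_pow Fact.out).1 (hn ▸ Subgroup.card_range_dvd f)
  exact ⟨k, hk⟩

theorem IsPGroup.card_range_eq_of_QLin_eq {p : ℕ} [Fact p.Prime] (hp : 3 ≤ p)
    {H₁ H₂ : Type*} [Group H₁] [Group H₂] [Finite H₁] [Finite H₂]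
    (hH₁ : IsPGroup p H₁) (hH₂ : IsPGroup p H₂) {lam₁ : H₁ →* ℂˣ} {lam₂ : H₂ →* ℂˣ}
    (hQ : QLin lam₁ = QLin lam₂) : Nat.card lam₁.range = Nat.card lam₂.range := by
  obtain ⟨k₁, hk₁⟩ := hH₁.exists_card_range_eq lam₁
  obtain ⟨k₂, hk₂⟩ := hH₂.exists_card_range_eq lam₂
  have htot : Module.finrank ℚ (QLin lam₁) = Module.finrank ℚ (QLin lam₂) := by rw [hQ]
  rw [finrank_QLin, finrank_QLin, hk₁, hk₂] at htot
  rw [hk₁, hk₂, (Nat.totient_prime_pow_strictMono Fact.out hp).injective htot]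

theorem map_subtype_ker_eq_of_normal {p : ℕ} [Fact p.Prime] (hp : 3 ≤ p) {G : Type}
    [Group G] [Fintype G] (hG : IsPGroup p G) {H₁ H₂ : Subgroup G}
    {lam₁ : H₁ →* ℂˣ} {lam₂ : H₂ →* ℂˣ} (hind : indChar H₁ lam₁ = indChar H₂ lam₂)
    (hQ : QLin lam₁ = QLin lam₂) (hN : (lam₁.ker.map H₁.subtype).Normal) :
    lam₁.ker.map H₁.subtype = lam₂.ker.map H₂.subtype := by
  have hH : Nat.card H₁ = Nat.card H₂ := by
    have h1 := congrFun hind 1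
    rw [indChar_one, indChar_one, div_eq_mul_inv, div_eq_mul_inv,
      mul_right_inj' (Nat.cast_ne_zero.2 Fintype.card_ne_zero), inv_inj] at h1
    exact_mod_cast h1
  have hrange := IsPGroup.card_range_eq_of_QLin_eq hp (hG.to_subgroup H₁) (hG.to_subgroup H₂) hQ
  have hle : lam₁.ker.map H₁.subtype ≤ lam₂.ker.map H₂.subtype :=
    calc lam₁.ker.map H₁.subtype = (lam₁.ker.map H₁.subtype).normalCore :=
          (Subgroup.normalCore_eq_self _).symm
      _ = (lam₂.ker.map H₂.subtype).normalCore := by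
          rw [← SetLike.coe_set_eq, ← charKer_indChar, ← charKer_indChar, hind]
      _ ≤ lam₂.ker.map H₂.subtype := Subgroup.normalCore_le _
  refine Subgroup.eq_of_le_of_card_ge hle (Nat.le_of_eq ?_)
  have c₁ := card_map_subtype_ker_mul_card_range H₁ lam₁
  have c₂ := card_map_subtype_ker_mul_card_range H₂ lam₂
  rw [hH, hrange, ← c₂] at c₁
  exact (Nat.eq_of_mul_eq_mul_right Nat.card_pos c₁).symm

theorem stmt4_general {p : ℕ} [Fact p.Prime] (hp : 3 ≤ p) {G : Type} [Group G] [Fintype G]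
    (hG : IsPGroup p G) (χ : G → ℂ)
    (H₁ H₂ : Subgroup G) (lam₁ : H₁ →* ℂˣ) (lam₂ : H₂ →* ℂˣ)
    (h₁ : χ = indChar H₁ lam₁) (h₂ : χ = indChar H₂ lam₂)
    (hQ₁ : QChar χ = QLin lam₁) (hQ₂ : QChar χ = QLin lam₂) :
    (Subgroup.map H₁.subtype lam₁.ker).Normal ↔
      (Subgroup.map H₂.subtype lam₂.ker).Normal := by
  have hind : indChar H₁ lam₁ = indChar H₂ lam₂ := h₁.symm.trans h₂
  have hQ : QLin lam₁ = QLin lam₂ := hQ₁.symm.trans hQ₂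
  exact ⟨fun hN => map_subtype_ker_eq_of_normal hp hG hind hQ hN ▸ hN,
    fun hN => map_subtype_ker_eq_of_normal hp hG hind.symm hQ.symm hN ▸ hN⟩

/-- If a nonlinear irreducible character `χ` of a `p`-group (`p ≥ 3`) is induced from linear
characters `λᵢ` of subgroups `Hᵢ` with `ℚ(χ) = ℚ(λᵢ)` for `i = 1, 2`, then `ker λ₁` is normal
in `G` iff `ker λ₂` is normal in `G`. -/
theorem stmt4 {p : ℕ} [Fact p.Prime] (hp : 3 ≤ p) {G : Type} [Group G] [Fintype G]
    (hG : IsPGroup p G) (χ : G → ℂ) (d : ℕ)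
    (hχ : IsIrrChar G χ) (hd : χ 1 = (d : ℂ)) (hnl : d ≠ 1)
    (H₁ H₂ : Subgroup G) (lam₁ : H₁ →* ℂˣ) (lam₂ : H₂ →* ℂˣ)
    (h₁ : χ = indChar H₁ lam₁) (h₂ : χ = indChar H₂ lam₂)
    (hQ₁ : QChar χ = QLin lam₁) (hQ₂ : QChar χ = QLin lam₂) :
    (Subgroup.map H₁.subtype lam₁.ker).Normal ↔
      (Subgroup.map H₂.subtype lam₂.ker).Normal :=
  stmt4_general hp hG χ H₁ H₂ lam₁ lam₂ h₁ h₂ hQ₁ hQ₂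
end
end

section
/- Let G be a GVZ p-group (p ≥ 3), χ ∈ Irr(G), and suppose χ = Ind_H^G(λ) for a subgroup H ≤ G and linear λ on H with ℚ(χ) = ℚ(λ). Then |ker(λ)| = χ(1)·|ker(χ)|. -/
/-
Write `χ = λ^G` and `d = |G : H|`. By the equality case of the triangle inequality, `Z(χ)` is the
set `Z` of `g ∈ H` on which all conjugates of `λ` agree, and `χ = d • μ` on `Z` with `μ = λ|_Z`;
hence `ker χ = ker μ`. The GVZ property makes `χ` vanish off `Z`, so the first orthogonality
relation gives `|Z| d² = |G|`, and `ℚ(χ) = ℚ(μ)`. The fields `ℚ(μ)` and `ℚ(λ)` are cyclotomic of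
degrees `φ |μ(Z)|` and `φ |λ(H)|`, both orders powers of `p`; since `φ` is injective on powers of an
odd prime, `|μ(Z)| = |λ(H)|`. Comparing `d |λ(H)| |ker λ| = |G| = d² |μ(Z)| |ker μ|` concludes.
-/

open scoped Classical
noncomputable section

theorem eq_of_norm_sum_eq_card {ι V : Type*} [Fintype ι] [NormedAddCommGroup V]
    [NormedSpace ℝ V] [StrictConvexSpace ℝ V] {z : ι → V} (hz : ∀ i, ‖z i‖ ≤ 1)
    (hsum : ‖∑ i, z i‖ = Fintype.card ι) (i j : ι) : z i = z j := by
  by_contra hij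
  have hn : (0 : ℝ) < Fintype.card ι := by exact_mod_cast Fintype.card_pos_iff.mpr ⟨i⟩
  have hlt := norm_sum_lt_of_strictConvexSpace (t := Finset.univ)
    (w := fun _ => (Fintype.card ι : ℝ)⁻¹) (fun _ _ => by positivity)
    (by simp [hn.ne']) (Finset.mem_univ i) (Finset.mem_univ j) hij (by positivity)
    (by positivity) (fun k _ => hz k)
  rw [← Finset.smul_sum, norm_smul, hsum, Real.norm_of_nonneg (by positivity),
    inv_mul_cancel₀ hn.ne'] at hlt
  exact lt_irrefl _ hlt

theorem Nat.totient_prime_pow_injective {p : ℕ} (hp : p.Prime) (hp3 : 3 ≤ p) :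
    Function.Injective fun k : ℕ => (p ^ k).totient := by
  have key : ∀ {a b : ℕ}, a < b → (p ^ a).totient < (p ^ b).totient := by
    intro a b hab
    rw [Nat.totient_prime_pow hp (n := b) (by omega)]
    rcases Nat.eq_zero_or_pos a with rfl | ha
    · rw [pow_zero, Nat.totient_one]
      nlinarith [Nat.one_le_pow (b - 1) p hp.pos, (by omega : 2 ≤ p - 1)]
    · rw [Nat.totient_prime_pow hp ha]
      exact Nat.mul_lt_mul_of_pos_right (Nat.pow_lt_pow_right hp.one_lt (by omega)) (by omega)
  intro a b hab
  rcases lt_trichotomy a b with h | h | h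
  · exact absurd hab (key h).ne
  · exact h
  · exact absurd hab (key h).ne'

theorem finrank_adjoin_range_eq_totient {A : Type*} [Group A] [Finite A] (f : A →* ℂˣ) :
    Module.finrank ℚ (IntermediateField.adjoin ℚ (Set.range fun a => (f a : ℂ))) =
      (Nat.card f.range).totient := by
  have : Finite f.range := Set.finite_range f |>.to_subtype
  obtain ⟨ζ, hζ⟩ := IsCyclic.exists_generator (α := f.range)
  have hprim : IsPrimitiveRoot ((ζ : ℂˣ) : ℂ) (Nat.card f.range) := by
    rw [← orderOf_eq_card_of_forall_mem_zpowers hζ,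
      ← orderOf_injective f.range.subtype Subtype.coe_injective ζ, ← orderOf_units]
    exact IsPrimitiveRoot.orderOf _
  have hadj : IntermediateField.adjoin ℚ (Set.range fun a => (f a : ℂ)) =
      IntermediateField.adjoin ℚ {((ζ : ℂˣ) : ℂ)} := by
    apply le_antisymm
    · rw [IntermediateField.adjoin_le_iff]
      rintro - ⟨a, rfl⟩
      obtain ⟨k, hk⟩ := hζ ⟨f a, a, rfl⟩
      have hval : (f a : ℂ) = ((ζ : ℂˣ) : ℂ) ^ k := by
        rw [← Units.val_zpow_eq_zpow_val, ← Subgroup.coe_zpow, show ζ ^ k = _ from hk]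
      change (f a : ℂ) ∈ IntermediateField.adjoin ℚ {((ζ : ℂˣ) : ℂ)}
      rw [hval]
      exact zpow_mem (IntermediateField.mem_adjoin_simple_self ℚ _) k
    · rw [IntermediateField.adjoin_simple_le_iff]
      obtain ⟨a, ha⟩ := ζ.2
      exact IntermediateField.subset_adjoin ℚ _ ⟨a, by simp only [ha]⟩
  have hpos : 0 < Nat.card f.range := Nat.card_pos
  rw [hadj, IntermediateField.adjoin.finrank (hprim.isIntegral hpos).tower_top,
    ← Polynomial.cyclotomic_eq_minpoly_rat hprim hpos, Polynomial.natDegree_cyclotomic]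

theorem card_range_eq_of_adjoin_range_eq {p : ℕ} [Fact p.Prime] (hp3 : 3 ≤ p)
    {A B : Type*} [Group A] [Group B] [Finite A] [Finite B]
    (hA : IsPGroup p A) (hB : IsPGroup p B) (f : A →* ℂˣ) (g : B →* ℂˣ)
    (h : IntermediateField.adjoin ℚ (Set.range fun a => (f a : ℂ)) =
      IntermediateField.adjoin ℚ (Set.range fun b => (g b : ℂ))) :
    Nat.card f.range = Nat.card g.range := by
  have : Finite f.range := Set.finite_range f |>.to_subtype
  have : Finite g.range := Set.finite_range g |>.to_subtype
  obtain ⟨m, hm⟩ :=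
    IsPGroup.iff_card.mp (hA.of_surjective f.rangeRestrict f.rangeRestrict_surjective)
  obtain ⟨n, hn⟩ :=
    IsPGroup.iff_card.mp (hB.of_surjective g.rangeRestrict g.rangeRestrict_surjective)
  have htot := finrank_adjoin_range_eq_totient f
  rw [h, finrank_adjoin_range_eq_totient g, hm, hn] at htot
  rw [hm, hn, Nat.totient_prime_pow_injective Fact.out hp3 htot.symm]

section Induced

variable {G : Type*} [Group G] (H : Subgroup G) (lam : H →* ℂˣ)

def extendByZero (g : G) : ℂ :=
  if h : g ∈ H then (lam ⟨g, h⟩ : ℂ) else 0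

variable {H lam}

theorem extendByZero_of_mem {g : G} (hg : g ∈ H) : extendByZero H lam g = lam ⟨g, hg⟩ :=
  dif_pos hg

theorem extendByZero_of_notMem {g : G} (hg : g ∉ H) : extendByZero H lam g = 0 :=
  dif_neg hg

theorem extendByZero_ne_zero_iff {g : G} : extendByZero H lam g ≠ 0 ↔ g ∈ H :=
  ⟨not_imp_comm.mp extendByZero_of_notMem, fun hg => by
    rw [extendByZero_of_mem hg]; exact Units.ne_zero _⟩

theorem extendByZero_one : extendByZero H lam 1 = 1 := by
  rw [extendByZero_of_mem H.one_mem]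
  exact congrArg Units.val (map_one lam)

theorem extendByZero_mul {a b : G} (ha : a ∈ H) (hb : b ∈ H) :
    extendByZero H lam (a * b) = extendByZero H lam a * extendByZero H lam b := by
  rw [extendByZero_of_mem ha, extendByZero_of_mem hb, extendByZero_of_mem (mul_mem ha hb),
    ← Units.val_mul, ← map_mul]
  rfl

theorem extendByZero_inv (g : G) : extendByZero H lam g⁻¹ = (extendByZero H lam g)⁻¹ := by
  by_cases hg : g ∈ H
  · rw [extendByZero_of_mem hg, extendByZero_of_mem (inv_mem hg), ← Units.val_inv_eq_inv_val,
      ← map_inv]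
    rfl
  · rw [extendByZero_of_notMem hg, extendByZero_of_notMem (by rwa [inv_mem_iff]), inv_zero]

theorem norm_extendByZero_of_mem [Finite H] {g : G} (hg : g ∈ H) :
    ‖extendByZero H lam g‖ = 1 := by
  rw [extendByZero_of_mem hg]
  refine Complex.norm_eq_one_of_pow_eq_one (n := Nat.card H) ?_ Nat.card_pos.ne'
  rw [← Units.val_pow_eq_pow_val, ← map_pow, pow_card_eq_one', map_one, Units.val_one]

theorem norm_extendByZero_le [Finite H] (g : G) : ‖extendByZero H lam g‖ ≤ 1 := by
  by_cases hg : g ∈ H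
  · exact (norm_extendByZero_of_mem hg).le
  · simp [extendByZero_of_notMem hg]

theorem conj_mem_of_extendByZero_conj_eq {g x : G} (hg : g ∈ H)
    (h : extendByZero H lam (x * g * x⁻¹) = extendByZero H lam g) : x * g * x⁻¹ ∈ H :=
  extendByZero_ne_zero_iff.mp (h ▸ extendByZero_ne_zero_iff.mpr hg)

variable (H lam)

def indCenter : Subgroup G where
  carrier := {g | g ∈ H ∧ ∀ x : G, extendByZero H lam (x * g * x⁻¹) = extendByZero H lam g}
  one_mem' := ⟨H.one_mem, fun x => by rw [mul_one, mul_inv_cancel]⟩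
  mul_mem' := by
    rintro a b ⟨ha, hac⟩ ⟨hb, hbc⟩
    refine ⟨mul_mem ha hb, fun x => ?_⟩
    rw [show x * (a * b) * x⁻¹ = (x * a * x⁻¹) * (x * b * x⁻¹) by group,
      extendByZero_mul (conj_mem_of_extendByZero_conj_eq ha (hac x))
        (conj_mem_of_extendByZero_conj_eq hb (hbc x)), hac, hbc, extendByZero_mul ha hb]
  inv_mem' := by
    rintro a ⟨ha, hac⟩
    refine ⟨inv_mem ha, fun x => ?_⟩
    rw [show x * a⁻¹ * x⁻¹ = (x * a * x⁻¹)⁻¹ by group, extendByZero_inv, extendByZero_inv, hac]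

variable {H lam}

theorem indCenter_le : indCenter H lam ≤ H := fun _ hg => hg.1

theorem mem_indCenter_of_eq_top (hH : H = ⊤) (g : G) : g ∈ indCenter H lam := by
  have hmem : ∀ a : G, a ∈ H := fun a => hH ▸ Subgroup.mem_top a
  refine ⟨hmem g, fun x => ?_⟩
  rw [extendByZero_mul (mul_mem (hmem x) (hmem g)) (inv_mem (hmem x)),
    extendByZero_mul (hmem x) (hmem g), extendByZero_inv, mul_comm (extendByZero H lam x),
    mul_assoc, mul_inv_cancel₀ (extendByZero_ne_zero_iff.mpr (hmem x)), mul_one]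

variable [Fintype G]

theorem indChar_apply (g : G) :
    indChar H lam g = (Nat.card H : ℂ)⁻¹ * ∑ x : G, extendByZero H lam (x * g * x⁻¹) :=
  rfl

theorem indChar_of_mem_indCenter {g : G} (hg : g ∈ indCenter H lam) :
    indChar H lam g = H.index * extendByZero H lam g := by
  have hcard : (H.index : ℂ) * Nat.card H = Nat.card G := by exact_mod_cast H.index_mul_card
  rw [indChar_apply, Finset.sum_congr rfl fun x _ => hg.2 x, Finset.sum_const, Finset.card_univ,
    nsmul_eq_mul, ← Nat.card_eq_fintype_card, ← hcard]
  field_simp [Nat.card_pos (α := H).ne']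

theorem indChar_one_s13 : indChar H lam 1 = H.index := by
  rw [indChar_of_mem_indCenter (indCenter H lam).one_mem, extendByZero_one, mul_one]

theorem norm_indChar_eq (g : G) :
    ‖indChar H lam g‖ * Nat.card H = ‖∑ x : G, extendByZero H lam (x * g * x⁻¹)‖ := by
  rw [indChar_apply, norm_mul, norm_inv, Complex.norm_natCast,
    mul_right_comm, inv_mul_cancel₀ (Nat.cast_ne_zero.mpr Nat.card_pos.ne'), one_mul]

theorem mem_indCenter_of_norm_indChar_eq {g : G} (h : ‖indChar H lam g‖ = H.index) :
    g ∈ indCenter H lam := by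
  have hsum : ‖∑ x : G, extendByZero H lam (x * g * x⁻¹)‖ = Fintype.card G := by
    rw [← norm_indChar_eq, h, ← Nat.card_eq_fintype_card, ← H.index_mul_card, Nat.cast_mul]
  have hconst (x : G) : extendByZero H lam (x * g * x⁻¹) = extendByZero H lam g := by
    simpa using eq_of_norm_sum_eq_card (fun x => norm_extendByZero_le _) hsum x 1
  have hg : extendByZero H lam g ≠ 0 := by
    intro h0
    simp only [hconst, h0, Finset.sum_const_zero, norm_zero] at hsum
    exact Fintype.card_ne_zero (by exact_mod_cast hsum.symm)
  exact ⟨extendByZero_ne_zero_iff.mp hg, hconst⟩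

variable (H lam) in
def indCenterChar : indCenter H lam →* ℂˣ :=
  lam.comp (Subgroup.inclusion indCenter_le)

theorem indChar_indCenter (z : indCenter H lam) :
    indChar H lam z = H.index * indCenterChar H lam z := by
  rw [indChar_of_mem_indCenter z.2, extendByZero_of_mem (indCenter_le z.2)]
  rfl

theorem charZ_indChar : charZ (indChar H lam) = indCenter H lam := by
  ext g
  change ‖_‖ = ‖_‖ ↔ _
  rw [indChar_one_s13, Complex.norm_natCast]
  refine ⟨mem_indCenter_of_norm_indChar_eq, fun hg => ?_⟩
  rw [indChar_of_mem_indCenter hg, norm_mul, Complex.norm_natCast,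
    norm_extendByZero_of_mem (indCenter_le hg), mul_one]

end Induced

section Scalar

variable {G : Type*} [Group G] {χ : G → ℂ} {Z : Subgroup G} {μ : Z →* ℂˣ} {d : ℕ}

theorem charKer_eq_image_ker (hd : d ≠ 0) (hZ : ∀ z : Z, χ z = d * μ z)
    (hvanish : ∀ g ∉ Z, χ g = 0) : charKer χ = Subtype.val '' (μ.ker : Set Z) := by
  have hχ1 : χ 1 = d := by simpa using hZ 1
  ext g
  constructor
  · intro hg
    have hgZ : g ∈ Z := by
      by_contra hgZ
      change χ g = χ 1 at hg
      rw [hvanish g hgZ, hχ1] at hg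
      exact hd (by exact_mod_cast hg.symm)
    refine ⟨⟨g, hgZ⟩, ?_, rfl⟩
    have hdμ := hZ ⟨g, hgZ⟩
    rw [show χ g = χ 1 from hg, hχ1] at hdμ
    refine (MonoidHom.mem_ker).mpr (Units.ext ?_)
    exact (mul_eq_left₀ (Nat.cast_ne_zero.mpr hd)).mp hdμ.symm
  · rintro ⟨z, hz, rfl⟩
    change χ z = χ 1
    rw [hZ, (MonoidHom.mem_ker).mp hz, hχ1, Units.val_one, mul_one]

theorem QChar_eq_adjoin_range (hd : d ≠ 0) (hZ : ∀ z : Z, χ z = d * μ z)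
    (hvanish : ∀ g ∉ Z, χ g = 0) :
    QChar χ = IntermediateField.adjoin ℚ (Set.range fun z => (μ z : ℂ)) := by
  apply le_antisymm
  · rw [QChar, IntermediateField.adjoin_le_iff]
    rintro - ⟨g, rfl⟩
    by_cases hg : g ∈ Z
    · rw [SetLike.mem_coe, hZ ⟨g, hg⟩]
      exact mul_mem (IntermediateField.natCast_mem _ d)
        (IntermediateField.subset_adjoin ℚ _ ⟨⟨g, hg⟩, rfl⟩)
    · rw [SetLike.mem_coe, hvanish g hg]
      exact zero_mem _
  · rw [IntermediateField.adjoin_le_iff]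
    rintro - ⟨z, rfl⟩
    have hμ : (μ z : ℂ) = χ z * (d : ℂ)⁻¹ := by
      rw [hZ z]
      field_simp
    change (μ z : ℂ) ∈ QChar χ
    rw [hμ]
    exact mul_mem (IntermediateField.subset_adjoin ℚ _ ⟨z, rfl⟩)
      (inv_mem (IntermediateField.natCast_mem _ d))

end Scalar

theorem card_mul_sq_eq_card {G : Type} [Group G] [Fintype G] {χ : G → ℂ} {Z : Subgroup G}
    {μ : Z →* ℂˣ} {d : ℕ} (hχ : IsIrrChar G χ) (hZ : ∀ z : Z, χ z = d * μ z)
    (hvanish : ∀ g ∉ Z, χ g = 0) : Nat.card Z * d ^ 2 = Nat.card G := by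
  obtain ⟨V, hV, rfl⟩ := hχ
  have hG : (Nat.card G : ℂ) ≠ 0 := Nat.cast_ne_zero.mpr Nat.card_pos.ne'
  let _ : Invertible (Nat.card G : ℂ) := invertibleOfNonzero hG
  have horth := FDRep.char_orthonormal V V
  rw [if_pos ⟨CategoryTheory.Iso.refl V⟩, inv_mul_eq_one₀ hG] at horth
  have hterm (g : G) : V.character g * V.character g⁻¹ = if g ∈ Z then (d : ℂ) ^ 2 else 0 := by
    split_ifs with hg
    · obtain ⟨z, rfl⟩ : ∃ z : Z, (z : G) = g := ⟨⟨g, hg⟩, rfl⟩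
      rw [← Subgroup.coe_inv, hZ, hZ, map_inv, Units.val_inv_eq_inv_val]
      field_simp [Units.ne_zero (μ z)]
    · rw [hvanish g hg, zero_mul]
  rw [Finset.sum_congr rfl fun g _ => hterm g, Finset.sum_ite, Finset.sum_const_zero, add_zero,
    Finset.sum_const, nsmul_eq_mul, ← Fintype.card_subtype, ← Nat.card_eq_fintype_card] at horth
  exact_mod_cast horth.symm

/-- If `G` is a GVZ `p`-group (`p ≥ 3`) and `χ = Ind_H^G λ` with `λ` linear on `H ≤ G` and
`ℚ(χ) = ℚ(λ)`, then `|ker λ| = χ(1)·|ker χ|`. -/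
theorem stmt13 {p : ℕ} [Fact p.Prime] (hp : 3 ≤ p) {G : Type} [Group G] [Fintype G]
    (hG : IsPGroup p G)
    (hGVZ : ∀ ψ : G → ℂ, IsIrrChar G ψ → ψ 1 ≠ 1 → ∀ g ∉ charZ ψ, ψ g = 0)
    (χ : G → ℂ) (d : ℕ) (hχ : IsIrrChar G χ) (hd : χ 1 = (d : ℂ))
    (H : Subgroup G) (lam : H →* ℂˣ)
    (hind : χ = indChar H lam) (hQ : QChar χ = QLin lam) :
    Nat.card lam.ker = d * Nat.card (charKer χ) := by
  subst hind
  set Z := indCenter H lam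
  set μ := indCenterChar H lam
  have hdH : d = H.index := by exact_mod_cast hd.symm.trans indChar_one_s13
  have hd0 : d ≠ 0 := hdH ▸ Subgroup.index_ne_zero_of_finite
  have hZ (z : Z) : indChar H lam z = d * μ z := hdH ▸ indChar_indCenter z
  have hvanish : ∀ g ∉ Z, indChar H lam g = 0 := by
    intro g hg
    have hd1 : d ≠ 1 := by
      rintro rfl
      exact hg (mem_indCenter_of_eq_top (Subgroup.index_eq_one.mp hdH.symm) g)
    exact hGVZ _ hχ (by rw [hd]; exact_mod_cast hd1) g (by rwa [charZ_indChar])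
  have hrange : Nat.card μ.range = Nat.card lam.range :=
    card_range_eq_of_adjoin_range_eq hp (hG.to_subgroup Z) (hG.to_subgroup H) μ lam
      ((QChar_eq_adjoin_range hd0 hZ hvanish).symm.trans hQ)
  have hcardZ := card_mul_sq_eq_card hχ hZ hvanish
  have hcardH := H.index_mul_card
  rw [← μ.ker.card_mul_index, Subgroup.index_ker, hrange] at hcardZ
  rw [← hdH, ← lam.ker.card_mul_index, Subgroup.index_ker] at hcardH
  rw [charKer_eq_image_ker hd0 hZ hvanish, Nat.card_image_of_injective Subtype.val_injective]
  have hpos : 0 < d * Nat.card lam.range := Nat.mul_pos (Nat.pos_of_ne_zero hd0) Nat.card_pos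
  refine Nat.eq_of_mul_eq_mul_left hpos ?_
  calc d * Nat.card lam.range * Nat.card lam.ker = Nat.card G := by rw [← hcardH]; ring
    _ = d * Nat.card lam.range * (d * Nat.card μ.ker) := by rw [← hcardZ]; ring
end
end
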